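/- If L is a strongly continuous domain, then the strong Lawson topology λ_s(L), the join of the strong Scott topology and the lower topology, is Hausdorff; moreover if L is a complete semilattice then λ_s(L) is compact and T1, hence compact Hausdorff when L is a strongly continuous complete semilattice. -/

import Mathlib

open Set

variable {L : Type*}

/-- A directed subset: nonempty and directed under `≤`. -/
def DirSet [Preorder L] (D : Set L) : Prop := D.Nonempty ∧ DirectedOn (· ≤ ·) D

/-- Strongly Scott open sets (the family `σ^s(L)`). -/
def StronglyScottOpen [Preorder L] [SupSet L] (U : Set L) : Prop :=
  IsUpperSet U ∧ ∀ D : Set L, DirSet D → ∀ x : L,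
    Ici (sSup D) ∩ Ici x ⊆ U → ∃ d ∈ D, Ici d ∩ Ici x ⊆ U

/-- The strong Scott topology `σ_s(L)`, generated by the strongly Scott open sets. -/
def strongScott (L : Type*) [Preorder L] [SupSet L] : TopologicalSpace L :=
  TopologicalSpace.generateFrom {U | StronglyScottOpen U}

/-- Scott open sets. -/
def ScottOpen [Preorder L] [SupSet L] (U : Set L) : Prop :=
  IsUpperSet U ∧ ∀ D : Set L, DirSet D → sSup D ∈ U → (D ∩ U).Nonempty

/-- The Scott topology `σ(L)`. -/
def scottTop (L : Type*) [Preorder L] [SupSet L] : TopologicalSpace L :=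
  TopologicalSpace.generateFrom {U | ScottOpen U}

/-- The upper topology `υ(L)`. -/
def upperTop (L : Type*) [Preorder L] : TopologicalSpace L :=
  TopologicalSpace.generateFrom {U | ∃ x : L, U = (Iic x)ᶜ}

/-- The lower topology `ω(L)`. -/
def lowerTop (L : Type*) [Preorder L] : TopologicalSpace L :=
  TopologicalSpace.generateFrom {U | ∃ x : L, U = (Ici x)ᶜ}

/-- The strong way-below relation `x ≪_s y`. -/
def SWayBelow [Preorder L] (x y : L) : Prop :=
  ∀ D : Set L, DirSet D → ∀ a : L,
    (⋂ d ∈ D, Ici d) ∩ Ici a ⊆ Ici y → ∃ d ∈ D, Ici d ∩ Ici a ⊆ Ici x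

/-- The way-below relation `x ≪ y`. -/
def WayBelow [Preorder L] [SupSet L] (x y : L) : Prop :=
  ∀ D : Set L, DirSet D → y ≤ sSup D → ∃ d ∈ D, x ≤ d

/-- `X` with topology `t` is a C-space (w.r.t. the order of `L`). -/
def IsCSpace [Preorder L] (t : TopologicalSpace L) : Prop :=
  ∀ U : Set L, @IsOpen _ (t) U → ∀ x ∈ U, ∃ y ∈ U,
    x ∈ @interior L t (Ici y) ∧ Ici y ⊆ U

/-- `L` is a strongly continuous domain. -/
def StronglyContinuousDomain (L : Type*) [Preorder L] [SupSet L] : Prop :=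
  IsCSpace (strongScott L)

/-- `L` is a continuous domain. -/
def ContinuousDomain (L : Type*) [Preorder L] [SupSet L] : Prop :=
  ∀ x : L, DirSet {y | WayBelow y x} ∧ IsLUB {y | WayBelow y x} x

/-- `L` is a hypercontinuous domain. -/
def HypercontinuousDomain (L : Type*) [Preorder L] : Prop :=
  ∀ x : L, DirSet {y | x ∈ @interior L (upperTop L) (Ici y)} ∧
    IsLUB {y | x ∈ @interior L (upperTop L) (Ici y)} x

/-- The strong Lawson topology `λ_s(L)`: common refinement of `σ_s(L)` and `ω(L)`. -/
def strongLawson (L : Type*) [Preorder L] [SupSet L] : TopologicalSpace L :=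
  TopologicalSpace.generateFrom
    {U | @IsOpen _ (strongScott L) U ∨ @IsOpen _ (lowerTop L) U}

/-! If `u ≰ v`, the C-space property applied to the strongly Scott open set `(↓v)ᶜ` yields `z ≰ v`
with `u` in the strong Scott interior of `↑z`; that interior and the lower open set `(↑z)ᶜ`
separate `u` and `v`. For compactness, an ultrafilter `F` on a complete semilattice converges to
`sup {b | ↑b ∈ F}`, a directed supremum because finite meets of members of `F` have infima. -/

open TopologicalSpace Filter Topology

theorem le_nhds_generateFrom_iff {α : Type*} {g : Set (Set α)} {f : Filter α} {a : α} :
    f ≤ @nhds α (generateFrom g) a ↔ ∀ s ∈ g, a ∈ s → s ∈ f :=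
  tendsto_nhds_generateFrom_iff (m := id)

theorem strongLawson_eq_inf [Preorder L] [SupSet L] :
    strongLawson L = strongScott L ⊓ lowerTop L :=
  generateFrom_union_isOpen (strongScott L) (lowerTop L)

theorem isOpen_strongLawson_of_strongScott [Preorder L] [SupSet L] {U : Set L}
    (h : IsOpen[strongScott L] U) : IsOpen[strongLawson L] U :=
  isOpen_generateFrom_of_mem (Or.inl h)

theorem isOpen_strongLawson_compl_Ici [Preorder L] [SupSet L] (x : L) :
    IsOpen[strongLawson L] (Ici x)ᶜ :=
  isOpen_generateFrom_of_mem (Or.inr (isOpen_generateFrom_of_mem ⟨x, rfl⟩))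

theorem stronglyScottOpen_compl_Iic [CompletePartialOrder L] (x : L) :
    StronglyScottOpen (Iic x)ᶜ := by
  have ici_inter_ici_subset : ∀ s a : L, Ici s ∩ Ici a ⊆ (Iic x)ᶜ ↔ ¬ (s ≤ x ∧ a ≤ x) := by
    refine fun s a => ⟨fun h hsa => h hsa (le_refl x), ?_⟩
    rintro h z ⟨hsz, haz⟩ hzx
    exact h ⟨hsz.trans hzx, haz.trans hzx⟩
  refine ⟨(isLowerSet_Iic x).compl, fun D hD a hsup => ?_⟩
  simp only [ici_inter_ici_subset] at hsup ⊢
  by_contra! hD_le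
  obtain ⟨d, hd⟩ := hD.1
  exact hsup ⟨(CompletePartialOrder.lubOfDirected D hD.2).2 fun e he => (hD_le e he).1,
    (hD_le d hd).2⟩

theorem isClosed_Iic_strongLawson [CompletePartialOrder L] (x : L) :
    IsClosed[strongLawson L] (Iic x) :=
  @isOpen_compl_iff L _ (strongLawson L) |>.mp <| isOpen_strongLawson_of_strongScott <|
    isOpen_generateFrom_of_mem (stronglyScottOpen_compl_Iic x)

theorem t1Space_strongLawson [CompletePartialOrder L] : @T1Space L (strongLawson L) := by
  let := strongLawson L
  refine ⟨fun x => ?_⟩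
  rw [← Icc_self, ← Ici_inter_Iic]
  exact (isOpen_compl_iff.mp (isOpen_strongLawson_compl_Ici x)).inter (isClosed_Iic_strongLawson x)

namespace StronglyContinuousDomain

variable [CompletePartialOrder L]

theorem exists_mem_interior_Ici_not_le (hL : StronglyContinuousDomain L) {u v : L}
    (huv : ¬ u ≤ v) : ∃ z, u ∈ @interior L (strongScott L) (Ici z) ∧ ¬ z ≤ v := by
  obtain ⟨z, hzv, hu, -⟩ := hL _ (isOpen_generateFrom_of_mem (stronglyScottOpen_compl_Iic v)) u huv
  exact ⟨z, hu, hzv⟩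

theorem disjoint_nhds_strongLawson (hL : StronglyContinuousDomain L) {u v : L} (huv : ¬ u ≤ v) :
    Disjoint (@nhds L (strongLawson L) u) (@nhds L (strongLawson L) v) := by
  obtain ⟨z, hu, hzv⟩ := hL.exists_mem_interior_Ici_not_le huv
  have hopen : IsOpen[strongLawson L] (@interior L (strongScott L) (Ici z)) :=
    isOpen_strongLawson_of_strongScott (@isOpen_interior L (strongScott L) _)
  exact disjoint_of_disjoint_of_mem
    (disjoint_compl_right.mono_left (@interior_subset L (strongScott L) _))
    (@IsOpen.mem_nhds L (strongLawson L) _ _ hopen hu)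
    (@IsOpen.mem_nhds L (strongLawson L) _ _ (isOpen_strongLawson_compl_Ici z) hzv)

theorem t2Space_strongLawson (hL : StronglyContinuousDomain L) : @T2Space L (strongLawson L) := by
  let := strongLawson L
  refine t2Space_iff_disjoint_nhds.2 fun u v hne => ?_
  by_cases huv : u ≤ v
  · exact (hL.disjoint_nhds_strongLawson fun hvu => hne (le_antisymm huv hvu)).symm
  · exact hL.disjoint_nhds_strongLawson huv

end StronglyContinuousDomain

theorem dirSet_setOf_Ici_mem [Preorder L] (hglb : ∀ S : Set L, S.Nonempty → ∃ b : L, IsGLB S b)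
    (f : Filter L) [f.NeBot] : DirSet {b | Ici b ∈ f} := by
  obtain ⟨bot, hbot⟩ := hglb univ (f.nonempty_of_mem univ_mem)
  refine ⟨⟨bot, univ_mem' fun z => hbot.1 (mem_univ z)⟩, fun b₁ hb₁ b₂ hb₂ => ?_⟩
  have hinter := inter_mem hb₁ hb₂
  obtain ⟨c, hc⟩ := hglb _ (f.nonempty_of_mem hinter)
  exact ⟨c, mem_of_superset hinter fun z hz => hc.1 hz, hc.2 fun z hz => hz.1,
    hc.2 fun z hz => hz.2⟩

section CompleteSemilattice

variable [CompletePartialOrder L] (hglb : ∀ S : Set L, S.Nonempty → ∃ b : L, IsGLB S b)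
include hglb

theorem Ultrafilter.le_nhds_strongLawson_sSup (f : Ultrafilter L) :
    (f : Filter L) ≤ @nhds L (strongLawson L) (sSup {b | Ici b ∈ f}) := by
  set D := {b | Ici b ∈ f}
  have hD : DirSet D := dirSet_setOf_Ici_mem hglb f
  rw [strongLawson_eq_inf, nhds_inf, le_inf_iff, strongScott, lowerTop, le_nhds_generateFrom_iff,
    le_nhds_generateFrom_iff]
  constructor
  · intro U hU hsup
    obtain ⟨d₀, hd₀⟩ := hD.1
    obtain ⟨d, hd, hdU⟩ := hU.2 D hD d₀ fun z hz => hU.1 hz.1 hsup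
    exact mem_of_superset (inter_mem hd hd₀) hdU
  · rintro _ ⟨x, rfl⟩ hx
    exact f.compl_mem_iff_notMem.2 fun hxD =>
      hx ((CompletePartialOrder.lubOfDirected D hD.2).1 hxD)

theorem compactSpace_strongLawson : @CompactSpace L (strongLawson L) := by
  let := strongLawson L
  rw [← isCompact_univ_iff, isCompact_iff_ultrafilter_le_nhds]
  exact fun f _ => ⟨_, mem_univ _, f.le_nhds_strongLawson_sSup hglb⟩

end CompleteSemilattice

theorem strongLawson_t2_and_compact [CompletePartialOrder L] :
    (StronglyContinuousDomain L → @T2Space L (strongLawson L)) ∧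
    ((∀ S : Set L, S.Nonempty → ∃ b : L, IsGLB S b) →
      @CompactSpace L (strongLawson L) ∧ @T1Space L (strongLawson L)) :=
  ⟨fun hL => hL.t2Space_strongLawson,
    fun hglb => ⟨compactSpace_strongLawson hglb, t1Space_strongLawson⟩⟩
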